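/- Let R ⊆ S ⊂ Q(R) be a ring extension inside the total quotient ring of R, and let M and N be S-modules with N torsion-free over S. Then every R-linear homomorphism from M to N is S-linear, i.e., Hom_R(M,N) = Hom_S(M,N). -/

import Mathlib

/-!
Write `s ∈ S` as `r / t` with `t` a nonzerodivisor of `R`. Since `t` is a unit of `Q(R)`, it is a
nonzerodivisor of `S`, hence cancellable in `N`; and `t • f (s • m) = f (r • m) = r • f m = t • s • f m`.
-/

open nonZeroDivisors

theorem LinearMap.map_smul_of_smul_eq_algebraMap {R S M N : Type*} [CommSemiring R] [Semiring S]
    [Algebra R S] [AddCommMonoid M] [AddCommMonoid N] [Module S M] [Module S N]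
    [Module R M] [Module R N] [IsScalarTower R S M] [IsScalarTower R S N]
    (f : M →ₗ[R] N) {s : S} {t r : R} (ht : IsSMulRegular N t)
    (hs : t • s = algebraMap R S r) (m : M) : f (s • m) = s • f m :=
  ht <| show t • f (s • m) = t • s • f m by
    rw [← map_smul, ← smul_assoc, hs, algebraMap_smul, map_smul, ← smul_assoc, hs,
      algebraMap_smul]

theorem Subalgebra.exists_smul_eq_algebraMap {R A : Type*} [CommRing R] [CommRing A]
    [Algebra R A] (P : Submonoid R) [IsLocalization P A] (S : Subalgebra R A) (s : S) :
    ∃ t ∈ P, ∃ r : R, t • s = algebraMap R S r := by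
  obtain ⟨⟨r, t⟩, h⟩ := IsLocalization.surj P (s : A)
  exact ⟨t, t.2, r, Subtype.ext <| by simpa [Algebra.smul_def, mul_comm] using h⟩

theorem Subalgebra.algebraMap_mem_nonZeroDivisors_of_isLocalization {R A : Type*} [CommRing R]
    [CommRing A] [Algebra R A] (P : Submonoid R) [IsLocalization P A] (S : Subalgebra R A)
    {t : R} (ht : t ∈ P) : algebraMap R S t ∈ S⁰ :=
  mem_nonZeroDivisors_of_injective (f := S.val) Subtype.val_injective <| by
    simpa using (IsLocalization.map_units A ⟨t, ht⟩).mem_nonZeroDivisors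

theorem hom_eq_of_torsionFree (R : Type*) [CommRing R]
    (S : Subalgebra R (Localization (nonZeroDivisors R)))
    (M N : Type*) [AddCommGroup M] [AddCommGroup N]
    [Module S M] [Module S N] [Module R M] [Module R N]
    [IsScalarTower R S M] [IsScalarTower R S N]
    (hN : ∀ s : S, s ∈ nonZeroDivisors S → ∀ n : N, s • n = 0 → n = 0)
    (f : M →ₗ[R] N) (s : S) (m : M) : f (s • m) = s • f m := by
  obtain ⟨t, ht, r, hs⟩ := S.exists_smul_eq_algebraMap R⁰ s
  have htN : IsSMulRegular N t := by
    refine fun x y hxy ↦ sub_eq_zero.mp <| hN _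
      (S.algebraMap_mem_nonZeroDivisors_of_isLocalization R⁰ ht) _ ?_
    rwa [algebraMap_smul, smul_sub, sub_eq_zero]
  exact f.map_smul_of_smul_eq_algebraMap htN hs m
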